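/- arXiv:2211.06337 — 3 statements merged into one kernel-verified Lean document; each statement's English description precedes it below -/
import Mathlib

section
/- Parallel composition of differentially private mechanisms (Proposition 3): Let X be a measurable space and let D, D' : Fin n → X be two datasets that differ in at most one coordinate. Let I₁, …, I_K ⊆ Fin n be pairwise disjoint index sets, and for each k let S_k be a map from functions I_k → X to probability measures on a measurable space Ω_k such that, whenever two inputs f, f' : I_k → X differ in at most one coordinate, S_k(f)(A) ≤ exp(ε_k)·S_k(f')(A) for every measurable A ⊆ Ω_k, where ε_k ≥ 0. Then for every measurable set A ⊆ Ω₁ × ⋯ × Ω_K, the product measure satisfies (⊗_{k=1}^K S_k(D|_{I_k}))(A) ≤ exp(max_{1≤k≤K} ε_k) · (⊗_{k=1}^K S_k(D'|_{I_k}))(A). -/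
open MeasureTheory

/-- Two datasets (functions on an index type) differ in at most one coordinate. -/
def NeighborFun {ι X : Type*} (f f' : ι → X) : Prop :=
  ∀ i j : ι, f i ≠ f' i → f j ≠ f' j → i = j

/-- Monotonicity of the product measure. -/
theorem measure_pi_mono' {ι : Type*} [Fintype ι] {α : ι → Type*} [∀ i, MeasurableSpace (α i)]
    {μ ν : ∀ i, Measure (α i)} (h : ∀ i, μ i ≤ ν i) :
    Measure.pi μ ≤ Measure.pi ν := by
  rw [Measure.le_iff]
  intro s hs
  rw [Measure.pi, Measure.pi, toMeasure_apply _ _ hs, toMeasure_apply _ _ hs]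
  have hle : (OuterMeasure.pi fun i => (μ i).toOuterMeasure)
      ≤ OuterMeasure.pi fun i => (ν i).toOuterMeasure := by
    rw [OuterMeasure.le_pi]
    intro t _
    refine (OuterMeasure.pi_pi_le _ t).trans ?_
    exact Finset.prod_le_prod' fun i _ => Measure.le_iff'.mp (h i) (t i)
  exact hle s

/-- Parallel composition of differentially private mechanisms. -/
theorem parallel_composition_DP {X : Type*} [MeasurableSpace X] {n K : ℕ} (hK : 1 ≤ K)
    (D D' : Fin n → X) (hDD' : NeighborFun D D')
    (I : Fin K → Set (Fin n)) (hI : Pairwise (Function.onFun Disjoint I))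
    (Ω : Fin K → Type*) [∀ k, MeasurableSpace (Ω k)]
    (S : ∀ k : Fin K, ((I k) → X) → Measure (Ω k))
    [∀ k f, IsProbabilityMeasure (S k f)]
    (ε : Fin K → ℝ) (hε : ∀ k, 0 ≤ ε k)
    (hS : ∀ k : Fin K, ∀ f f' : (I k) → X, NeighborFun f f' →
      ∀ A : Set (Ω k), MeasurableSet A →
        S k f A ≤ ENNReal.ofReal (Real.exp (ε k)) * S k f' A)
    (A : Set (∀ k, Ω k)) (hA : MeasurableSet A) :
    Measure.pi (fun k => S k (fun i => D i)) A
      ≤ ENNReal.ofReal (Real.exp (⨆ k, ε k)) *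
        Measure.pi (fun k => S k (fun i => D' i)) A := by
  classical
  set c := ENNReal.ofReal (Real.exp (⨆ k, ε k)) with hc
  have hbdd : BddAbove (Set.range ε) := Set.Finite.bddAbove (Set.finite_range ε)
  have hεle : ∀ k, ε k ≤ ⨆ k, ε k := fun k => le_ciSup hbdd k
  have h1c : 1 ≤ c := by
    rw [hc, ← ENNReal.ofReal_one]
    refine ENNReal.ofReal_le_ofReal (Real.one_le_exp ?_)
    exact (hε ⟨0, hK⟩).trans (hεle ⟨0, hK⟩)
  by_cases hall : ∀ k : Fin K, ∀ i : I k, D i = D' i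
  · have heq : (fun k => S k (fun i : I k => D i)) = fun k => S k (fun i => D' i) := by
      funext k; congr 1; funext i; exact hall k i
    rw [heq]
    exact le_mul_of_one_le_left (by positivity) h1c
  · push_neg at hall
    obtain ⟨k0, i0, hi0⟩ := hall
    have hkeq : ∀ k, k ≠ k0 → (fun i : I k => D i) = (fun i : I k => D' i) := by
      intro k hk
      funext i
      by_contra hne
      have hii : (i : Fin n) = (i0 : Fin n) := hDD' i i0 hne hi0
      exact (Set.disjoint_left.mp (hI hk)) i.2 (by rw [hii]; exact i0.2)
    have hnb : NeighborFun (fun i : I k0 => D i) (fun i : I k0 => D' i) := fun i j hi hj =>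
      Subtype.ext (hDD' i j hi hj)
    have hk0 : S k0 (fun i : I k0 => D i) ≤ c • S k0 (fun i : I k0 => D' i) := by
      rw [Measure.le_iff]
      intro s hs
      refine (hS k0 _ _ hnb s hs).trans ?_
      simp only [Measure.smul_apply, smul_eq_mul]
      gcongr
      exact ENNReal.ofReal_le_ofReal (Real.exp_le_exp.mpr (hεle k0))
    set νf : ∀ k : Fin K, Measure (Ω k) := fun k => S k (fun i : I k => D' i) with hνf
    set ν' : ∀ k : Fin K, Measure (Ω k) :=
      Function.update νf k0 (c • νf k0) with hν'
    have hmono : ∀ k, S k (fun i : I k => D i) ≤ ν' k := by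
      intro k
      by_cases hk : k = k0
      · subst hk
        rw [hν', Function.update_self]
        exact hk0
      · rw [hν', Function.update_of_ne hk, hνf, hkeq k hk]
    haveI hfin : ∀ k, IsFiniteMeasure (ν' k) := by
      intro k
      by_cases hk : k = k0
      · subst hk
        rw [hν', Function.update_self]
        constructor
        rw [Measure.smul_apply, smul_eq_mul, measure_univ, mul_one]
        exact ENNReal.ofReal_lt_top
      · rw [hν', Function.update_of_ne hk]
        infer_instance
    have hpieq : Measure.pi ν' = c • Measure.pi νf := by
      refine Measure.pi_eq fun s hs => ?_
      rw [Measure.smul_apply, Measure.pi_pi, smul_eq_mul]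
      rw [Finset.prod_eq_mul_prod_sdiff_singleton_of_mem (Finset.mem_univ k0) fun k => ν' k (s k)]
      rw [hν', Function.update_self, Measure.smul_apply, smul_eq_mul, mul_assoc]
      congr 1
      have : ∀ k ∈ Finset.univ \ {k0}, ν' k (s k) = νf k (s k) := by
        intro k hk
        simp only [Finset.mem_sdiff, Finset.mem_singleton] at hk
        rw [hν', Function.update_of_ne hk.2]
      rw [Finset.prod_congr rfl this,
        ← Finset.prod_eq_mul_prod_sdiff_singleton_of_mem (Finset.mem_univ k0) fun k => νf k (s k)]
    calc Measure.pi (fun k => S k (fun i : I k => D i)) A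
        ≤ Measure.pi ν' A := Measure.le_iff'.mp (measure_pi_mono' hmono) A
      _ = c * Measure.pi νf A := by rw [hpieq, Measure.smul_apply, smul_eq_mul]
end

section
/- The M-dimensional geometric mechanism is ε-differentially private: Let ε > 0, Δ > 0 with Δ an integer, and M ≥ 1, and set t = exp(−ε/Δ). For k ∈ ℤ^M define the probability mass function q_k(z) = ∏_{m=1}^M p_TwoGeo(z_m − k_m | t) on ℤ^M. Then for all k, k' ∈ ℤ^M with ∑_{m=1}^M |k_m − k'_m| ≤ Δ and every set A ⊆ ℤ^M, ∑_{z ∈ A} q_k(z) ≤ exp(ε) · ∑_{z ∈ A} q_{k'}(z). -/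
/-- The two-sided geometric probability mass function with parameter `t`. -/
noncomputable def twoSidedGeomPMF (t : ℝ) (k : ℤ) : ℝ :=
  t ^ k.natAbs * (1 - t) / (1 + t)

/-- The M-dimensional geometric mechanism is ε-differentially private. -/
theorem geometric_mechanism_DP {M : ℕ} (hM : 1 ≤ M) (ε : ℝ) (hε : 0 < ε)
    (Δ : ℤ) (hΔ : 0 < Δ)
    (k k' : Fin M → ℤ) (hkk' : ∑ m, |k m - k' m| ≤ Δ)
    (A : Set (Fin M → ℤ)) :
    (∑' z : A, ENNReal.ofReal
        (∏ m, twoSidedGeomPMF (Real.exp (-ε / (Δ : ℝ))) ((z : Fin M → ℤ) m - k m)))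
      ≤ ENNReal.ofReal (Real.exp ε) *
        ∑' z : A, ENNReal.ofReal
          (∏ m, twoSidedGeomPMF (Real.exp (-ε / (Δ : ℝ))) ((z : Fin M → ℤ) m - k' m)) := by
  set t := Real.exp (-ε / (Δ : ℝ)) with htdef
  have hΔR : (0:ℝ) < (Δ:ℝ) := by exact_mod_cast hΔ
  have ht0 : 0 < t := Real.exp_pos _
  have ht1 : t < 1 := by
    rw [htdef]
    apply Real.exp_lt_one_iff.mpr
    apply div_neg_of_neg_of_pos (by linarith) hΔR
  have hC : 0 ≤ (1 - t) / (1 + t) := div_nonneg (by linarith) (by linarith)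
  have key : ∀ z : Fin M → ℤ,
      (∏ m, twoSidedGeomPMF t (z m - k m))
        ≤ Real.exp ε * ∏ m, twoSidedGeomPMF t (z m - k' m) := by
    intro z
    have hprod : ∀ w : Fin M → ℤ, (∏ m, twoSidedGeomPMF t (z m - w m))
        = t ^ (∑ m, (z m - w m).natAbs) * ((1 - t) / (1 + t)) ^ M := by
      intro w
      simp only [twoSidedGeomPMF, mul_div_assoc]
      rw [Finset.prod_mul_distrib, Finset.prod_pow_eq_pow_sum, Finset.prod_const,
        Finset.card_univ, Fintype.card_fin]
    rw [hprod k, hprod k', ← mul_assoc]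
    apply mul_le_mul_of_nonneg_right _ (pow_nonneg hC M)
    have hD : t ^ Δ.toNat = Real.exp (-ε) := by
      rw [htdef, ← Real.exp_nat_mul]
      congr 1
      have : ((Δ.toNat : ℕ) : ℝ) = (Δ : ℝ) := by
        norm_cast
        exact Int.toNat_of_nonneg hΔ.le
      rw [this]
      field_simp
    have hsum : (∑ m, (k m - k' m).natAbs) ≤ Δ.toNat := by
      rw [Int.le_toNat hΔ.le]
      push_cast
      exact hkk'
    have hBA : (∑ m, (z m - k' m).natAbs) ≤ (∑ m, (z m - k m).natAbs) + Δ.toNat := by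
      calc (∑ m, (z m - k' m).natAbs)
          ≤ ∑ m, ((z m - k m).natAbs + (k m - k' m).natAbs) := by
            apply Finset.sum_le_sum
            intro m _
            have h : z m - k' m = (z m - k m) + (k m - k' m) := by ring
            rw [h]
            exact Int.natAbs_add_le _ _
        _ = (∑ m, (z m - k m).natAbs) + ∑ m, (k m - k' m).natAbs :=
            Finset.sum_add_distrib
        _ ≤ _ := by omega
    calc t ^ (∑ m, (z m - k m).natAbs)
        = Real.exp ε * (t ^ (∑ m, (z m - k m).natAbs) * t ^ Δ.toNat) := by
          rw [hD, Real.exp_neg]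
          field_simp
      _ = Real.exp ε * t ^ ((∑ m, (z m - k m).natAbs) + Δ.toNat) := by
          rw [pow_add]
      _ ≤ Real.exp ε * t ^ (∑ m, (z m - k' m).natAbs) := by
          apply mul_le_mul_of_nonneg_left _ (Real.exp_pos ε).le
          exact pow_le_pow_of_le_one ht0.le ht1.le hBA
  calc (∑' z : A, ENNReal.ofReal (∏ m, twoSidedGeomPMF t ((z : Fin M → ℤ) m - k m)))
      ≤ ∑' z : A, ENNReal.ofReal
          (Real.exp ε * ∏ m, twoSidedGeomPMF t ((z : Fin M → ℤ) m - k' m)) := by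
        apply ENNReal.tsum_le_tsum
        intro z
        exact ENNReal.ofReal_le_ofReal (key z)
    _ = ENNReal.ofReal (Real.exp ε) *
          ∑' z : A, ENNReal.ofReal (∏ m, twoSidedGeomPMF t ((z : Fin M → ℤ) m - k' m)) := by
        rw [← ENNReal.tsum_mul_left]
        congr 1
        funext z
        rw [ENNReal.ofReal_mul (Real.exp_pos ε).le]
end

section
/- Theorem 1, no-partition case (n₁ = 0): Algorithm 1 is (ε₁+ε₂)-differentially private. Fix ε₁, ε₂ > 0, d ≥ 1, n ≥ 1, censoring thresholds 1 > a_1 > ⋯ > a_M > 0, and an arbitrary selection function A : ℤ^M → {a_1, …, a_M}. For a dataset D ∈ (Δ_{d−1})^n, define the output distribution P_D on ℤ^M × ℝ^d by P_D(A') = ∑_{g ∈ ℤ^M} [∏_{m=1}^M p_TwoGeo(g_m − Score(D)_m | exp(−ε₂/2))] · μ_{S₀(D, A(g)), s(g)}({y ∈ ℝ^d : (g, y) ∈ A'}), where s(g) = −d log(A(g))/(n ε₁) and μ_{m, s} is the measure on ℝ^d with Lebesgue density ∏_{j=1}^d p_Lap(y_j | m_j, s). Then for all datasets D, D' ∈ (Δ_{d−1})^n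 that differ in at most one point and every measurable set A' ⊆ ℤ^M × ℝ^d, P_D(A') ≤ exp(ε₁ + ε₂) · P_{D'}(A'). -/
open MeasureTheory

/-- Membership in the `(d-1)`-dimensional simplex. -/
def InSimplex {d : ℕ} (x : Fin d → ℝ) : Prop :=
  (∀ j, 0 ≤ x j) ∧ ∑ j, x j = 1

/-- Censored sufficient statistic `S₀(D, a)`. -/
noncomputable def censoredStat {n d : ℕ} (D : Fin n → Fin d → ℝ) (a : ℝ) : Fin d → ℝ :=
  fun j => (n : ℝ)⁻¹ * ∑ i, Real.log (max (D i j) a)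

/-- Number of uncensored individuals in dataset `D` at threshold `t`. -/
noncomputable def uncensoredCount {n d : ℕ} (D : Fin n → Fin d → ℝ) (t : ℝ) : ℕ :=
  (Finset.univ.filter fun i : Fin n => ∀ j, t ≤ D i j).card

/-- The score function `Score(D)_m = u_m - u_{m-1}` with `u_0 = 0`. -/
noncomputable def score {n d M : ℕ} (D : Fin n → Fin d → ℝ) (a : Fin M → ℝ)
    (m : Fin M) : ℤ :=
  (uncensoredCount D (a m) : ℤ) -
    if _ : (m : ℕ) = 0 then 0
    else (uncensoredCount D
      (a ⟨(m : ℕ) - 1, Nat.lt_of_le_of_lt (Nat.sub_le _ _) m.isLt⟩) : ℤ)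

/-- The measure on ℝ^d whose Lebesgue density is the product of `d` independent
Laplace densities with locations `m j` and common scale `s`. -/
noncomputable def laplaceProductMeasure {d : ℕ} (m : Fin d → ℝ) (s : ℝ) :
    Measure (Fin d → ℝ) :=
  volume.withDensity fun y =>
    ENNReal.ofReal (∏ j, Real.exp (-|y j - m j| / s) / (2 * s))

/-- Output distribution of Algorithm 1 without partitioning: first a noisy score
(geometric mechanism with parameter `exp(-ε₂/2)`), then given the noisy score `g` the
threshold `Asel g` is selected and the censored statistic is released with Laplace noise
of scale `-d log(Asel g)/(n ε₁)`. -/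
noncomputable def algOutput {n d M : ℕ} (D : Fin n → Fin d → ℝ) (a : Fin M → ℝ)
    (Asel : (Fin M → ℤ) → ℝ) (ε₁ ε₂ : ℝ)
    (A' : Set ((Fin M → ℤ) × (Fin d → ℝ))) : ENNReal :=
  ∑' g : Fin M → ℤ,
    ENNReal.ofReal (∏ m, twoSidedGeomPMF (Real.exp (-ε₂ / 2)) (g m - score D a m)) *
      laplaceProductMeasure (censoredStat D (Asel g))
        (-(d : ℝ) * Real.log (Asel g) / (n * ε₁)) {y | (g, y) ∈ A'}

/-! ### Auxiliary lemmas -/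


lemma twoGeo_nonneg {t : ℝ} (ht0 : 0 < t) (ht1 : t < 1) (k : ℤ) :
    0 ≤ twoSidedGeomPMF t k := by
  unfold twoSidedGeomPMF
  have h1 : (0:ℝ) ≤ t ^ k.natAbs := pow_nonneg ht0.le _
  have h2 : (0:ℝ) ≤ 1 - t := by linarith
  have h3 : (0:ℝ) < 1 + t := by linarith
  positivity

lemma twoGeo_le {t : ℝ} (ht0 : 0 < t) (ht1 : t < 1) (k k' : ℤ) :
    twoSidedGeomPMF t k ≤ t⁻¹ ^ (k - k').natAbs * twoSidedGeomPMF t k' := by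
  unfold twoSidedGeomPMF
  have hc : 0 ≤ (1 - t) / (1 + t) := by
    apply div_nonneg <;> linarith
  have key : t ^ k.natAbs ≤ t⁻¹ ^ (k - k').natAbs * t ^ k'.natAbs := by
    rw [inv_pow, ← div_eq_inv_mul, le_div_iff₀ (pow_pos ht0 _), ← pow_add]
    apply pow_le_pow_of_le_one ht0.le ht1.le
    have := Int.natAbs_sub_le k (k - k')
    simpa using this
  calc t ^ k.natAbs * (1 - t) / (1 + t)
      = t ^ k.natAbs * ((1 - t) / (1 + t)) := by ring
    _ ≤ (t⁻¹ ^ (k - k').natAbs * t ^ k'.natAbs) * ((1 - t) / (1 + t)) :=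
        mul_le_mul_of_nonneg_right key hc
    _ = t⁻¹ ^ (k - k').natAbs * (t ^ k'.natAbs * (1 - t) / (1 + t)) := by ring

lemma count_diff {n d : ℕ} (D D' : Fin n → Fin d → ℝ) (i₀ : Fin n)
    (hone : ∀ i, i ≠ i₀ → D i = D' i) (t : ℝ) :
    (uncensoredCount D t : ℤ) - (uncensoredCount D' t : ℤ)
      = (if ∀ j, t ≤ D i₀ j then 1 else 0) - (if ∀ j, t ≤ D' i₀ j then 1 else 0) := by
  unfold uncensoredCount
  rw [Finset.card_filter, Finset.card_filter]
  push_cast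
  rw [← Finset.sum_sub_distrib,
    Finset.sum_eq_single i₀ (fun b _ hb => by rw [hone b hb]; ring)
      (fun h => absurd (Finset.mem_univ i₀) h)]

lemma score_sens {n d M : ℕ} (D D' : Fin n → Fin d → ℝ) (a : Fin M → ℝ)
    (hanti : StrictAnti a) (i₀ : Fin n) (hone : ∀ i, i ≠ i₀ → D i = D' i) :
    ∑ m : Fin M, ((score D a m - score D' a m).natAbs : ℤ) ≤ 2 := by
  set F : (Fin n → Fin d → ℝ) → ℕ → ℤ := fun X k =>
    if h : 0 < k ∧ k ≤ M then
      (if ∀ j, a ⟨k - 1, by omega⟩ ≤ X i₀ j then 1 else 0) else 0 with hF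
  have hmono : ∀ X, ∀ k, k < M → F X k ≤ F X (k + 1) := by
    intro X k hk
    rcases Nat.eq_zero_or_pos k with hk0 | hkpos
    · subst hk0
      simp only [hF]
      rw [dif_neg (by omega)]
      split_ifs with h1 h2 <;> norm_num
    · simp only [hF]
      rw [dif_pos ⟨hkpos, hk.le⟩, dif_pos ⟨by omega, by omega⟩]
      by_cases hp : ∀ j, a ⟨k - 1, by omega⟩ ≤ X i₀ j
      · rw [if_pos hp, if_pos]
        intro j
        refine le_trans ?_ (hp j)
        apply hanti.antitone
        simp only [Fin.mk_le_mk]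
        omega
      · rw [if_neg hp]
        split_ifs <;> norm_num
  have hF0 : ∀ X, F X 0 = 0 := by intro X; simp [hF]
  have hFM : ∀ X, F X M ≤ 1 := by
    intro X
    simp only [hF]
    split_ifs <;> norm_num
  have hid : ∀ m : Fin M, score D a m - score D' a m
      = (F D (↑m + 1) - F D' (↑m + 1)) - (F D ↑m - F D' ↑m) := by
    intro m
    have hidx : (⟨(↑m : ℕ) + 1 - 1, by omega⟩ : Fin M) = m := by
      ext; simp
    have hFm1 : ∀ X, F X (↑m + 1)
        = (if ∀ j, a m ≤ X i₀ j then (1:ℤ) else 0) := by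
      intro X
      simp only [hF]
      rw [dif_pos ⟨Nat.succ_pos _, m.isLt⟩, hidx]
    unfold score
    by_cases hm0 : (m : ℕ) = 0
    · rw [dif_pos hm0, dif_pos hm0]
      have hFm : ∀ X, F X (↑m : ℕ) = 0 := by
        intro X; simp only [hF]; rw [dif_neg (by omega)]
      rw [hFm1, hFm1, hFm, hFm]
      have := count_diff D D' i₀ hone (a m)
      omega
    · rw [dif_neg hm0, dif_neg hm0]
      have hFm : ∀ X, F X (↑m : ℕ)
          = (if ∀ j, a ⟨(m:ℕ) - 1, Nat.lt_of_le_of_lt (Nat.sub_le _ _) m.isLt⟩ ≤ X i₀ j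
              then (1:ℤ) else 0) := by
        intro X; simp only [hF]; rw [dif_pos ⟨by omega, m.isLt.le⟩]
      rw [hFm1, hFm1, hFm, hFm]
      have h1 := count_diff D D' i₀ hone (a m)
      have h2 := count_diff D D' i₀ hone
        (a ⟨(m:ℕ) - 1, Nat.lt_of_le_of_lt (Nat.sub_le _ _) m.isLt⟩)
      omega
  calc ∑ m : Fin M, ((score D a m - score D' a m).natAbs : ℤ)
      = ∑ m : Fin M,
          |(F D (↑m + 1) - F D' (↑m + 1)) - (F D ↑m - F D' ↑m)| := by
        refine Finset.sum_congr rfl fun m _ => ?_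
        rw [← Int.abs_eq_natAbs, hid m]
    _ = ∑ k ∈ Finset.range M,
          |(F D (k + 1) - F D' (k + 1)) - (F D k - F D' k)| :=
        Fin.sum_univ_eq_sum_range
          (fun k => |(F D (k + 1) - F D' (k + 1)) - (F D k - F D' k)|) M
    _ ≤ ∑ k ∈ Finset.range M,
          ((F D (k + 1) - F D k) + (F D' (k + 1) - F D' k)) := by
        apply Finset.sum_le_sum
        intro k hk
        have hk' := Finset.mem_range.mp hk
        have h1 := hmono D k hk'
        have h2 := hmono D' k hk'
        have heq : (F D (k + 1) - F D' (k + 1)) - (F D k - F D' k)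
            = (F D (k+1) - F D k) - (F D' (k+1) - F D' k) := by ring
        rw [heq]
        calc |(F D (k+1) - F D k) - (F D' (k+1) - F D' k)|
            ≤ |F D (k+1) - F D k| + |F D' (k+1) - F D' k| := abs_sub _ _
          _ = (F D (k+1) - F D k) + (F D' (k+1) - F D' k) := by
              rw [abs_of_nonneg (by omega), abs_of_nonneg (by omega)]
    _ = (F D M - F D 0) + (F D' M - F D' 0) := by
        rw [Finset.sum_add_distrib, Finset.sum_range_sub, Finset.sum_range_sub]
    _ ≤ 2 := by
        have h1 := hF0 D; have h2 := hF0 D'; have h3 := hFM D; have h4 := hFM D'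
        omega

lemma stat_sens {n d : ℕ} (hn : 1 ≤ n) (D D' : Fin n → Fin d → ℝ)
    (hD : ∀ i, InSimplex (D i)) (hD' : ∀ i, InSimplex (D' i))
    (i₀ : Fin n) (hone : ∀ i, i ≠ i₀ → D i = D' i)
    (aa : ℝ) (ha0 : 0 < aa) (ha1 : aa < 1) :
    ∑ j, |censoredStat D aa j - censoredStat D' aa j|
      ≤ (d : ℝ) * (-Real.log aa) / n := by
  have hnpos : (0:ℝ) < n := by exact_mod_cast hn
  have hbound : ∀ (X : Fin n → Fin d → ℝ), (∀ i, InSimplex (X i)) → ∀ i j,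
      Real.log aa ≤ Real.log (max (X i j) aa) ∧ Real.log (max (X i j) aa) ≤ 0 := by
    intro X hX i j
    have hx0 : 0 ≤ X i j := (hX i).1 j
    have hx1 : X i j ≤ 1 := by
      have := Finset.single_le_sum (f := X i) (fun k _ => (hX i).1 k) (Finset.mem_univ j)
      rw [(hX i).2] at this
      exact this
    exact ⟨Real.log_le_log ha0 (le_max_right _ _),
      Real.log_nonpos (le_trans ha0.le (le_max_right _ _)) (max_le hx1 ha1.le)⟩
  have hper : ∀ j, |censoredStat D aa j - censoredStat D' aa j|
      ≤ (-Real.log aa) / n := by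
    intro j
    unfold censoredStat
    rw [← mul_sub, ← Finset.sum_sub_distrib,
      Finset.sum_eq_single i₀ (fun b _ hb => by rw [hone b hb]; ring)
        (fun h => absurd (Finset.mem_univ i₀) h)]
    rw [abs_mul, abs_of_nonneg (by positivity : (0:ℝ) ≤ ((n:ℝ))⁻¹)]
    have h1 := hbound D hD i₀ j
    have h2 := hbound D' hD' i₀ j
    have habs : |Real.log (max (D i₀ j) aa) - Real.log (max (D' i₀ j) aa)|
        ≤ -Real.log aa := by
      rw [abs_sub_le_iff]
      constructor <;> linarith [h1.1, h1.2, h2.1, h2.2]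
    calc ((n:ℝ))⁻¹ * |Real.log (max (D i₀ j) aa) - Real.log (max (D' i₀ j) aa)|
        ≤ ((n:ℝ))⁻¹ * (-Real.log aa) :=
          mul_le_mul_of_nonneg_left habs (by positivity)
      _ = (-Real.log aa) / n := by rw [inv_mul_eq_div]
  calc ∑ j, |censoredStat D aa j - censoredStat D' aa j|
      ≤ ∑ _j : Fin d, (-Real.log aa) / n := Finset.sum_le_sum fun j _ => hper j
    _ = (d:ℝ) * (-Real.log aa) / n := by
        rw [Finset.sum_const, Finset.card_univ, Fintype.card_fin, nsmul_eq_mul]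
        ring

lemma laplace_ratio {d : ℕ} (m m' : Fin d → ℝ) (s ε : ℝ) (hs : 0 < s)
    (hsum : ∑ j, |m j - m' j| ≤ s * ε)
    (B : Set (Fin d → ℝ)) (hB : MeasurableSet B) :
    laplaceProductMeasure m s B
      ≤ ENNReal.ofReal (Real.exp ε) * laplaceProductMeasure m' s B := by
  unfold laplaceProductMeasure
  rw [withDensity_apply _ hB, withDensity_apply _ hB,
    ← lintegral_const_mul' _ _ ENNReal.ofReal_ne_top]
  apply lintegral_mono
  intro y
  dsimp only
  rw [← ENNReal.ofReal_mul (Real.exp_nonneg _)]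
  apply ENNReal.ofReal_le_ofReal
  have h2s : (0:ℝ) < 2 * s := by linarith
  have hRnonneg : ∀ j : Fin d, 0 ≤ Real.exp (-|y j - m' j| / s) / (2 * s) :=
    fun j => div_nonneg (Real.exp_nonneg _) h2s.le
  have hfac : ∀ j : Fin d, Real.exp (-|y j - m j| / s) / (2 * s)
      ≤ Real.exp (|m j - m' j| / s) * (Real.exp (-|y j - m' j| / s) / (2 * s)) := by
    intro j
    rw [← mul_div_assoc, ← Real.exp_add]
    apply div_le_div_of_nonneg_right _ h2s.le
    apply Real.exp_le_exp.mpr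
    rw [← add_div]
    apply div_le_div_of_nonneg_right _ hs.le
    have := abs_sub_le (y j) (m j) (m' j)
    have habs : |m j - m' j| = |(m j) - (m' j)| := rfl
    linarith [this]
  calc ∏ j, Real.exp (-|y j - m j| / s) / (2 * s)
      ≤ ∏ j, (Real.exp (|m j - m' j| / s) *
          (Real.exp (-|y j - m' j| / s) / (2 * s))) :=
        Finset.prod_le_prod
          (fun j _ => div_nonneg (Real.exp_nonneg _) h2s.le)
          (fun j _ => hfac j)
    _ = (∏ j, Real.exp (|m j - m' j| / s)) *
          ∏ j, Real.exp (-|y j - m' j| / s) / (2 * s) := Finset.prod_mul_distrib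
    _ ≤ Real.exp ε * ∏ j, Real.exp (-|y j - m' j| / s) / (2 * s) := by
        apply mul_le_mul_of_nonneg_right _ (Finset.prod_nonneg fun j _ => hRnonneg j)
        rw [← Real.exp_sum]
        apply Real.exp_le_exp.mpr
        rw [← Finset.sum_div]
        rw [div_le_iff₀ hs]
        calc ∑ j, |m j - m' j| ≤ s * ε := hsum
          _ = ε * s := by ring

/-- Theorem 1, no-partition case: Algorithm 1 is `(ε₁ + ε₂)`-differentially private. -/
theorem algorithm_one_DP_no_partition {n d M : ℕ} (hd : 1 ≤ d) (hn : 1 ≤ n)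
    (ε₁ ε₂ : ℝ) (hε₁ : 0 < ε₁) (hε₂ : 0 < ε₂)
    (a : Fin M → ℝ) (ha : ∀ m, 0 < a m ∧ a m < 1) (hanti : StrictAnti a)
    (Asel : (Fin M → ℤ) → ℝ) (hAsel : ∀ g, ∃ m, Asel g = a m)
    (D D' : Fin n → Fin d → ℝ)
    (hD : ∀ i, InSimplex (D i)) (hD' : ∀ i, InSimplex (D' i))
    (hnb : ∀ i₁ i₂ : Fin n, D i₁ ≠ D' i₁ → D i₂ ≠ D' i₂ → i₁ = i₂)
    (A' : Set ((Fin M → ℤ) × (Fin d → ℝ))) (hA' : MeasurableSet A') :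
    algOutput D a Asel ε₁ ε₂ A'
      ≤ ENNReal.ofReal (Real.exp (ε₁ + ε₂)) * algOutput D' a Asel ε₁ ε₂ A' := by
  obtain ⟨i₀, hone⟩ : ∃ i₀ : Fin n, ∀ i, i ≠ i₀ → D i = D' i := by
    by_cases hex : ∃ i, D i ≠ D' i
    · obtain ⟨i₀, hi₀⟩ := hex
      refine ⟨i₀, fun i hi => ?_⟩
      by_contra h
      exact hi (hnb i i₀ h hi₀)
    · push_neg at hex
      exact ⟨⟨0, hn⟩, fun i _ => hex i⟩
  set t := Real.exp (-ε₂ / 2) with ht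
  have ht0 : 0 < t := Real.exp_pos _
  have ht1 : t < 1 := Real.exp_lt_one_iff.mpr (by linarith)
  have hti : t⁻¹ = Real.exp (ε₂ / 2) := by
    rw [ht, show -ε₂ / 2 = -(ε₂ / 2) by ring, Real.exp_neg, inv_inv]
  have htinv : 1 ≤ t⁻¹ := by
    rw [hti]; exact Real.one_le_exp (by linarith)
  have hsens : ∑ m : Fin M, (score D' a m - score D a m).natAbs ≤ 2 := by
    have h := score_sens D D' a hanti i₀ hone
    have heq : ∑ m : Fin M, ((score D a m - score D' a m).natAbs : ℤ)
        = ∑ m : Fin M, ((score D' a m - score D a m).natAbs : ℤ) := by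
      refine Finset.sum_congr rfl fun m _ => ?_
      congr 1
      omega
    rw [heq] at h
    exact_mod_cast h
  unfold algOutput
  rw [← ENNReal.tsum_mul_left]
  apply ENNReal.tsum_le_tsum
  intro g
  -- geometric bound
  have hgeo : (∏ m, twoSidedGeomPMF t (g m - score D a m))
      ≤ Real.exp ε₂ * ∏ m, twoSidedGeomPMF t (g m - score D' a m) := by
    calc ∏ m, twoSidedGeomPMF t (g m - score D a m)
        ≤ ∏ m, (t⁻¹ ^ ((g m - score D a m) - (g m - score D' a m)).natAbs
            * twoSidedGeomPMF t (g m - score D' a m)) :=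
          Finset.prod_le_prod (fun m _ => twoGeo_nonneg ht0 ht1 _)
            (fun m _ => twoGeo_le ht0 ht1 _ _)
      _ = (∏ m, t⁻¹ ^ ((g m - score D a m) - (g m - score D' a m)).natAbs)
            * ∏ m, twoSidedGeomPMF t (g m - score D' a m) := Finset.prod_mul_distrib
      _ ≤ Real.exp ε₂ * ∏ m, twoSidedGeomPMF t (g m - score D' a m) := by
          apply mul_le_mul_of_nonneg_right _
            (Finset.prod_nonneg fun m _ => twoGeo_nonneg ht0 ht1 _)
          rw [Finset.prod_pow_eq_pow_sum]
          have hΔ : ∑ m : Fin M,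
              ((g m - score D a m) - (g m - score D' a m)).natAbs ≤ 2 := by
            calc ∑ m : Fin M, ((g m - score D a m) - (g m - score D' a m)).natAbs
                = ∑ m : Fin M, (score D' a m - score D a m).natAbs := by
                  refine Finset.sum_congr rfl fun m _ => ?_
                  congr 1
                  ring
              _ ≤ 2 := hsens
          calc t⁻¹ ^ (∑ m : Fin M,
                ((g m - score D a m) - (g m - score D' a m)).natAbs)
              ≤ t⁻¹ ^ 2 := pow_le_pow_right₀ htinv hΔ
            _ = Real.exp ε₂ := by
                rw [hti, sq, ← Real.exp_add]
                congr 1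
                ring
  -- Laplace bound
  obtain ⟨m₀, hm₀⟩ := hAsel g
  have ha0 : 0 < Asel g := hm₀ ▸ (ha m₀).1
  have ha1 : Asel g < 1 := hm₀ ▸ (ha m₀).2
  have hlog : Real.log (Asel g) < 0 := Real.log_neg ha0 ha1
  have hdpos : (0:ℝ) < d := by exact_mod_cast hd
  have hnpos : (0:ℝ) < n := by exact_mod_cast hn
  have hs : 0 < -(d:ℝ) * Real.log (Asel g) / (n * ε₁) :=
    div_pos (by nlinarith) (by positivity)
  have hB : MeasurableSet {y | (g, y) ∈ A'} := measurable_prodMk_left hA'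
  have hsum : ∑ j, |censoredStat D (Asel g) j - censoredStat D' (Asel g) j|
      ≤ (-(d:ℝ) * Real.log (Asel g) / (n * ε₁)) * ε₁ := by
    refine le_trans (stat_sens hn D D' hD hD' i₀ hone _ ha0 ha1) ?_
    apply le_of_eq
    field_simp
  have hlap := laplace_ratio (censoredStat D (Asel g)) (censoredStat D' (Asel g))
    (-(d:ℝ) * Real.log (Asel g) / (n * ε₁)) ε₁ hs hsum _ hB
  calc ENNReal.ofReal (∏ m, twoSidedGeomPMF t (g m - score D a m)) *
        laplaceProductMeasure (censoredStat D (Asel g))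
          (-(d : ℝ) * Real.log (Asel g) / (n * ε₁)) {y | (g, y) ∈ A'}
      ≤ (ENNReal.ofReal (Real.exp ε₂) *
          ENNReal.ofReal (∏ m, twoSidedGeomPMF t (g m - score D' a m))) *
        (ENNReal.ofReal (Real.exp ε₁) *
          laplaceProductMeasure (censoredStat D' (Asel g))
            (-(d : ℝ) * Real.log (Asel g) / (n * ε₁)) {y | (g, y) ∈ A'}) := by
        apply mul_le_mul'
        · rw [← ENNReal.ofReal_mul (Real.exp_nonneg _)]
          exact ENNReal.ofReal_le_ofReal hgeo
        · exact hlap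
    _ = ENNReal.ofReal (Real.exp (ε₁ + ε₂)) *
          (ENNReal.ofReal (∏ m, twoSidedGeomPMF t (g m - score D' a m)) *
            laplaceProductMeasure (censoredStat D' (Asel g))
              (-(d : ℝ) * Real.log (Asel g) / (n * ε₁)) {y | (g, y) ∈ A'}) := by
        rw [Real.exp_add, ENNReal.ofReal_mul (Real.exp_nonneg _)]
        ring
end
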